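/- If f : X → X is a cw-expansive homeomorphism of a compact metric space with cw-expansivity constant 2ε, then for each r > 0 there is k_r ∈ ℕ such that diam(f^n(C^s_ε(x))) ≤ r and diam(f^{−n}(C^u_ε(x))) ≤ r for every x ∈ X and every n ≥ k_r, where C^s_ε(x) and C^u_ε(x) denote the connected components of x in W^s_ε(x) and W^u_ε(x) respectively. -/

import Mathlib

open Topology Filter Metric TopologicalSpace

namespace LS

variable {X Y : Type*} [MetricSpace X] [MetricSpace Y]

/-- finite forward iterates of a homeomorphism -/
def hpowAux (f : X ≃ₜ X) : ℕ → X ≃ₜ X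
  | 0 => Homeomorph.refl X
  | n+1 => (hpowAux f n).trans f

/-- `ℤ`-iterates of a homeomorphism: `hpow f k` is the `k`-th iterate `f^k`. -/
def hpow (f : X ≃ₜ X) : ℤ → X ≃ₜ X
  | Int.ofNat n => hpowAux f n
  | Int.negSucc n => (hpowAux f (n+1)).symm

/-- the `ℤ`-iteration map of `f` -/
def F (f : X ≃ₜ X) : ℤ → X → X := fun k => hpow f k

/-- δ-limit-pseudo-orbit for a system given by its iterate family `T` -/
def IsLimitPseudoOrbit (T : ℤ → Y → Y) (δ : ℝ) (x : ℤ → Y) : Prop :=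
  (∀ k : ℤ, dist (T 1 (x k)) (x (k+1)) ≤ δ) ∧
  Tendsto (fun k : ℤ => dist (T 1 (x k)) (x (k+1))) (cocompact ℤ) (𝓝 0)

/-- `z` ε-limit-shadows the sequence `x` -/
def LimitShadows (T : ℤ → Y → Y) (ε : ℝ) (x : ℤ → Y) (z : Y) : Prop :=
  (∀ k : ℤ, dist (T k z) (x k) ≤ ε) ∧
  Tendsto (fun k : ℤ => dist (T k z) (x k)) (cocompact ℤ) (𝓝 0)

/-- the L-shadowing property -/
def LShadowing (T : ℤ → Y → Y) : Prop :=
  ∀ ε > (0:ℝ), ∃ δ > (0:ℝ), ∀ x : ℤ → Y, IsLimitPseudoOrbit T δ x → ∃ z, LimitShadows T ε x z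

/-- the shadowing property -/
def Shadowing (T : ℤ → Y → Y) : Prop :=
  ∀ ε > (0:ℝ), ∃ δ > (0:ℝ), ∀ x : ℤ → Y,
    (∀ k : ℤ, dist (T 1 (x k)) (x (k+1)) < δ) → ∃ z, ∀ k : ℤ, dist (T k z) (x k) < ε

/-- local c-stable set -/
def Ws (f : X ≃ₜ X) (c : ℝ) (x : X) : Set X :=
  {y | ∀ k : ℤ, 0 ≤ k → dist (F f k y) (F f k x) ≤ c}

/-- local c-unstable set -/
def Wu (f : X ≃ₜ X) (c : ℝ) (x : X) : Set X :=
  {y | ∀ k : ℤ, k ≤ 0 → dist (F f k y) (F f k x) ≤ c}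

/-- stable set -/
def WsA (f : X ≃ₜ X) (x : X) : Set X :=
  {y | Tendsto (fun k : ℤ => dist (F f k y) (F f k x)) atTop (𝓝 0)}

/-- unstable set -/
def WuA (f : X ≃ₜ X) (x : X) : Set X :=
  {y | Tendsto (fun k : ℤ => dist (F f k y) (F f k x)) atBot (𝓝 0)}

/-- asymptotic local stable set -/
def Vs (f : X ≃ₜ X) (c : ℝ) (x : X) : Set X := WsA f x ∩ Ws f c x

/-- asymptotic local unstable set -/
def Vu (f : X ≃ₜ X) (c : ℝ) (x : X) : Set X := WuA f x ∩ Wu f c x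

/-- image of a nonempty compact set under a homeomorphism -/
def himg (f : X ≃ₜ X) (A : NonemptyCompacts X) : NonemptyCompacts X :=
  ⟨⟨f '' A, A.isCompact.image f.continuous⟩, A.nonempty.image f⟩

/-- the `ℤ`-iteration family of the induced hyperspace map `2^f` -/
def HF (f : X ≃ₜ X) : ℤ → NonemptyCompacts X → NonemptyCompacts X :=
  fun k A => himg (hpow f k) A

end LS

/-! If the forward images `f^n(C^s_ε(x_k))` kept a diameter above `r` for arbitrarily large `n`,
a Hausdorff limit `L` of such continua would be a continuum of positive diameter all of whose
points stay `2ε`-close under every iterate, i.e. a nondegenerate connected subset of a dynamical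
ball `Γ_{2ε}(y)`. The unstable case is the stable case for `f⁻¹`. -/

open Set

namespace TopologicalSpace.NonemptyCompacts

variable {X : Type*} [TopologicalSpace X]

theorem isClosed_setOf_prod_self_subset {S : Set (X × X)} (hS : IsClosed S) :
    IsClosed {K : NonemptyCompacts X | (K : Set X) ×ˢ (K : Set X) ⊆ S} :=
  (isClosed_subsets_of_isClosed hS).preimage
    (continuous_prod.comp (continuous_id.prodMk continuous_id))

theorem isClosed_setOf_prod_self_inter_nonempty {S : Set (X × X)} (hS : IsClosed S) :
    IsClosed {K : NonemptyCompacts X | ((K : Set X) ×ˢ (K : Set X) ∩ S).Nonempty} :=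
  (isClosed_inter_nonempty_of_isClosed hS).preimage
    (continuous_prod.comp (continuous_id.prodMk continuous_id))

theorem isClosed_setOf_isPreconnected [T2Space X] :
    IsClosed {K : NonemptyCompacts X | IsPreconnected (K : Set X)} := by
  refine isOpen_compl_iff.mp (isOpen_iff_forall_mem_open.mpr fun K hK => ?_)
  simp only [mem_compl_iff, mem_ofPred_eq, IsPreconnected, not_forall] at hK
  obtain ⟨u, v, hu, hv, hKuv, ⟨a, haK, hau⟩, ⟨b, hbK, hbv⟩, huv⟩ := hK
  have huv' : ∀ w ∈ (K : Set X), w ∈ u → w ∉ v :=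
    fun w hw hwu hwv => huv ⟨w, hw, hwu, hwv⟩
  -- `u` and `v` may meet outside `K`: replace them by disjoint neighbourhoods of `K \ v`, `K \ u`.
  obtain ⟨U, V, hU, hV, hKU, hKV, hUV⟩ := SeparatedNhds.of_isCompact_isCompact
    (K.isCompact.inter_right hv.isClosed_compl) (K.isCompact.inter_right hu.isClosed_compl)
    (disjoint_left.mpr fun w ⟨hwK, hwv⟩ ⟨_, hwu⟩ => (hKuv hwK).elim hwu hwv)
  refine ⟨{L | (L : Set X) ⊆ U ∪ V} ∩ {L | ((L : Set X) ∩ U).Nonempty} ∩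
    {L | ((L : Set X) ∩ V).Nonempty}, ?_, ?_, ?_⟩
  · rintro L ⟨⟨hLUV, hLU⟩, hLV⟩ hL
    obtain ⟨c, -, hcU, hcV⟩ := hL U V hU hV hLUV hLU hLV
    exact hUV.le_bot ⟨hcU, hcV⟩
  · exact ((isOpen_subsets_of_isOpen (hU.union hV)).inter
      (isOpen_inter_nonempty_of_isOpen hU)).inter (isOpen_inter_nonempty_of_isOpen hV)
  refine ⟨⟨fun w hw => ?_, ⟨a, haK, hKU ⟨haK, huv' a haK hau⟩⟩⟩,
    ⟨b, hbK, hKV ⟨hbK, fun hbu => huv' b hbK hbu hbv⟩⟩⟩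
  by_cases hwv : w ∈ v
  · exact Or.inr (hKV ⟨hw, fun hwu => huv' w hw hwu hwv⟩)
  · exact Or.inl (hKU ⟨hw, hwv⟩)

end TopologicalSpace.NonemptyCompacts

theorem Metric.exists_dist_gt_of_diam_gt {X : Type*} [PseudoMetricSpace X] {s : Set X} {r : ℝ}
    (hr : 0 ≤ r) (h : r < diam s) : ∃ y ∈ s, ∃ z ∈ s, r < dist y z := by
  by_contra! hs
  exact h.not_ge (diam_le_of_forall_dist_le hr hs)

theorem IsClosed.connectedComponentIn {X : Type*} [TopologicalSpace X] {F : Set X}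
    (hF : IsClosed F) (x : X) : IsClosed (connectedComponentIn F x) := by
  refine isClosed_of_closure_subset fun y hy => ?_
  have hx : x ∈ F := by
    by_contra hx
    simp [connectedComponentIn_eq_empty hx] at hy
  exact isPreconnected_connectedComponentIn.closure.subset_connectedComponentIn
    (subset_closure (mem_connectedComponentIn hx))
    (closure_minimal (connectedComponentIn_subset F x) hF) hy

namespace LS

variable {X : Type*} [MetricSpace X]

theorem hpowAux_toEquiv (f : X ≃ₜ X) : ∀ n : ℕ, (hpowAux f n).toEquiv = f.toEquiv ^ n
  | 0 => rfl
  | n + 1 => by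
    rw [pow_succ', ← hpowAux_toEquiv f n]
    rfl

theorem hpow_toEquiv (f : X ≃ₜ X) : ∀ k : ℤ, (hpow f k).toEquiv = f.toEquiv ^ k
  | Int.ofNat n => by
    rw [Int.ofNat_eq_natCast, zpow_natCast, ← hpowAux_toEquiv]
    rfl
  | Int.negSucc n => by
    rw [zpow_negSucc, ← hpowAux_toEquiv]
    rfl

theorem F_apply (f : X ≃ₜ X) (k : ℤ) (x : X) : F f k x = (f.toEquiv ^ k) x := by
  rw [← hpow_toEquiv]
  rfl

theorem F_add_apply (f : X ≃ₜ X) (a b : ℤ) (x : X) : F f (a + b) x = F f a (F f b x) := by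
  simp only [F_apply, zpow_add, Equiv.Perm.mul_apply]

theorem F_symm (f : X ≃ₜ X) (k : ℤ) : F f.symm k = F f (-k) := by
  ext x
  simp only [F_apply, zpow_neg, ← inv_zpow]
  rfl

@[fun_prop]
theorem continuous_F (f : X ≃ₜ X) (k : ℤ) : Continuous (F f k) :=
  (hpow f k).continuous

theorem Ws_symm (f : X ≃ₜ X) (c : ℝ) (x : X) : Ws f.symm c x = Wu f c x := by
  ext y
  simp only [Ws, Wu, F_symm, mem_ofPred_eq]
  exact ⟨fun h k hk => by simpa using h (-k) (by omega),
    fun h k hk => h (-k) (by omega)⟩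

theorem Wu_symm (f : X ≃ₜ X) (c : ℝ) (x : X) : Wu f.symm c x = Ws f c x := by
  simpa using (Ws_symm f.symm c x).symm

theorem mem_Ws_self (f : X ≃ₜ X) {c : ℝ} (hc : 0 ≤ c) (x : X) : x ∈ Ws f c x :=
  fun k _ => (dist_self (F f k x)).trans_le hc

theorem isClosed_Ws (f : X ≃ₜ X) (c : ℝ) (x : X) : IsClosed (Ws f c x) := by
  simp only [Ws, ofPred_forall]
  exact isClosed_iInter fun k => isClosed_iInter fun _ =>
    isClosed_le (by fun_prop) continuous_const

theorem dist_F_le_of_mem_Ws {f : X ≃ₜ X} {c : ℝ} {x y z : X} (hy : y ∈ Ws f c x)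
    (hz : z ∈ Ws f c x) {k : ℤ} (hk : 0 ≤ k) : dist (F f k y) (F f k z) ≤ 2 * c := by
  linarith [dist_triangle_right (F f k y) (F f k z) (F f k x), hy k hk, hz k hk]

theorem subsingleton_of_forall_prod_self_subset {f : X ≃ₜ X} {c : ℝ}
    (hcw : ∀ x, IsTotallyDisconnected (Ws f c x ∩ Wu f c x)) {L : Set X} (hL : IsPreconnected L)
    (horbit : ∀ m : ℤ, L ×ˢ L ⊆ {p | dist (F f m p.1) (F f m p.2) ≤ c}) :
    L.Subsingleton := by
  intro y hy z hz
  refine (hcw z L (fun w hw => ⟨fun m _ => ?_, fun m _ => ?_⟩) hL hy hz) <;>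
    exact horbit m (mk_mem_prod hw hz)

theorem exists_forall_diam_F_image_connectedComponentIn_Ws_le [CompactSpace X] (f : X ≃ₜ X)
    {ε : ℝ} (hε : 0 ≤ ε)
    (hcw : ∀ x, IsTotallyDisconnected (Ws f (2 * ε) x ∩ Wu f (2 * ε) x))
    {r : ℝ} (hr : 0 < r) :
    ∃ k : ℕ, ∀ x : X, ∀ n : ℕ, k ≤ n →
      diam (F f n '' connectedComponentIn (Ws f ε x) x) ≤ r := by
  by_contra! h
  choose x n hkn hdiam using h
  set C : ℕ → Set X := fun k => connectedComponentIn (Ws f ε (x k)) (x k)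
  let K (k : ℕ) : NonemptyCompacts X :=
    ⟨⟨F f (n k) '' C k,
      ((isClosed_Ws f ε (x k)).connectedComponentIn _).isCompact.image (continuous_F f _)⟩,
      ⟨_, mem_image_of_mem _ (mem_connectedComponentIn (mem_Ws_self f hε (x k)))⟩⟩
  obtain ⟨L, -, φ, hφ, hlim⟩ := isCompact_univ.tendsto_subseq fun k => mem_univ (K k)
  have hpre : IsPreconnected (L : Set X) :=
    NonemptyCompacts.isClosed_setOf_isPreconnected.mem_of_tendsto hlim <| .of_forall fun k =>
      isPreconnected_connectedComponentIn.image _ (continuous_F f _).continuousOn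
  have hwide : ((L : Set X) ×ˢ (L : Set X) ∩ {p | r ≤ dist p.1 p.2}).Nonempty := by
    refine (NonemptyCompacts.isClosed_setOf_prod_self_inter_nonempty
      (isClosed_le (by fun_prop) (by fun_prop))).mem_of_tendsto hlim <| .of_forall fun k => ?_
    obtain ⟨y, hy, z, hz, hyz⟩ := exists_dist_gt_of_diam_gt hr.le (hdiam (φ k))
    exact ⟨(y, z), ⟨hy, hz⟩, hyz.le⟩
  have horbit (m : ℤ) :
      (L : Set X) ×ˢ (L : Set X) ⊆ {p | dist (F f m p.1) (F f m p.2) ≤ 2 * ε} := by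
    have hn : Tendsto (fun k => (n (φ k) : ℤ)) atTop atTop :=
      tendsto_natCast_atTop_atTop.comp
        ((tendsto_atTop_mono hkn tendsto_id).comp hφ.tendsto_atTop)
    refine (NonemptyCompacts.isClosed_setOf_prod_self_subset
      (isClosed_le (by fun_prop) (by fun_prop))).mem_of_tendsto hlim ?_
    filter_upwards [hn.eventually_ge_atTop (-m)] with k hk
    rintro ⟨_, _⟩ ⟨⟨y, hy, rfl⟩, z, hz, rfl⟩
    show dist (F f m (F f _ y)) (F f m (F f _ z)) ≤ 2 * ε
    rw [← F_add_apply, ← F_add_apply]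
    exact dist_F_le_of_mem_Ws (connectedComponentIn_subset _ _ hy)
      (connectedComponentIn_subset _ _ hz) (by omega)
  obtain ⟨⟨y, z⟩, ⟨hy, hz⟩, hyz⟩ := hwide
  have hzy : z = y := subsingleton_of_forall_prod_self_subset hcw hpre horbit hz hy
  simp only [mem_ofPred_eq, hzy, dist_self] at hyz
  linarith

end LS

/-- uniform contraction of stable/unstable continua of a cw-expansive
homeomorphism. -/
theorem stmt_8 {X : Type*} [MetricSpace X] [CompactSpace X] (f : X ≃ₜ X)
    (ε : ℝ) (hε : 0 < ε)
    (hcw : ∀ x : X, IsTotallyDisconnected (LS.Ws f (2*ε) x ∩ LS.Wu f (2*ε) x)) :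
    ∀ r > (0:ℝ), ∃ k : ℕ, ∀ x : X, ∀ n : ℕ, k ≤ n →
      Metric.diam (LS.F f n '' connectedComponentIn (LS.Ws f ε x) x) ≤ r ∧
      Metric.diam (LS.F f (-(n:ℤ)) '' connectedComponentIn (LS.Wu f ε x) x) ≤ r := by
  intro r hr
  have hcw_symm (x : X) :
      IsTotallyDisconnected (LS.Ws f.symm (2 * ε) x ∩ LS.Wu f.symm (2 * ε) x) := by
    rw [LS.Ws_symm, LS.Wu_symm, inter_comm]
    exact hcw x
  obtain ⟨k₁, hk₁⟩ :=
    LS.exists_forall_diam_F_image_connectedComponentIn_Ws_le f hε.le hcw hr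
  obtain ⟨k₂, hk₂⟩ :=
    LS.exists_forall_diam_F_image_connectedComponentIn_Ws_le f.symm hε.le hcw_symm hr
  refine ⟨max k₁ k₂, fun x n hn => ⟨hk₁ x n (le_of_max_le_left hn), ?_⟩⟩
  simpa only [LS.F_symm, LS.Ws_symm] using hk₂ x n (le_of_max_le_right hn)
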